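/- arXiv:1111.6923 — 2 statements merged into one kernel-verified Lean document; each statement's English description precedes it below -/
import Mathlib

section
/- Union bound for the failure event (equation (13) of the paper): let M be a nonempty finite set, S ⊆ M, and α : M → ℝ satisfy α_j = 0 for all j ∈ M \ S and |α_j| ≥ α_min for all j ∈ S, where α_min > 0. Let β > 0 and 0 ≤ τ < β·α_min, and let P be the product measure over M of standard Gaussians N(0,1). Then P({w : (∃ j ∈ M \ S with |β·α_j + w_j| ≥ τ) or (∃ j ∈ S with |β·α_j + w_j| < τ)}) ≤ |M \ S|·exp(−τ²/2) + |S|·exp(−(β·α_min − τ)²/2). -/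
open MeasureTheory ProbabilityTheory Real

/-- Half-line Gaussian tail bound: `P(Z ≥ t) ≤ exp (-t^2/2) / 2` for `t ≥ 0`. -/
lemma gauss_tail_Ici (t : ℝ) (ht : 0 ≤ t) :
    gaussianReal 0 1 (Set.Ici t) ≤ ENNReal.ofReal (Real.exp (-t ^ 2 / 2) / 2) := by
  rw [gaussianReal_apply_eq_integral 0 one_ne_zero (Set.Ici t)]
  refine ENNReal.ofReal_le_ofReal ?_
  have hpdf : ∀ x : ℝ, gaussianPDFReal 0 1 x = (√(2 * π))⁻¹ * Real.exp (-x ^ 2 / 2) := by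
    intro x
    simp [gaussianPDFReal]
  have hg_int : Integrable (fun x : ℝ => (√(2 * π))⁻¹ * Real.exp (-t ^ 2 / 2) *
      Real.exp (-(1/2) * (x - t) ^ 2)) := by
    refine Integrable.const_mul ?_ _
    exact (integrable_exp_neg_mul_sq (by norm_num : (0:ℝ) < 1/2)).comp_sub_right t
  have hmono : ∫ x in Set.Ici t, gaussianPDFReal 0 1 x ≤
      ∫ x in Set.Ici t, (√(2 * π))⁻¹ * Real.exp (-t ^ 2 / 2) *
        Real.exp (-(1/2) * (x - t) ^ 2) := by
    refine setIntegral_mono_on ((integrable_gaussianPDFReal 0 1).integrableOn)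
      hg_int.integrableOn measurableSet_Ici ?_
    intro x hx
    rw [hpdf]
    rw [mul_assoc, ← Real.exp_add]
    have h2π : (0:ℝ) < √(2 * π) := Real.sqrt_pos.mpr (by positivity)
    refine mul_le_mul_of_nonneg_left ?_ (by positivity)
    refine Real.exp_le_exp.mpr ?_
    have : t ≤ x := hx
    nlinarith
  refine hmono.trans ?_
  rw [MeasureTheory.integral_const_mul]
  have hshift : ∫ x in Set.Ici t, Real.exp (-(1/2) * (x - t) ^ 2) =
      ∫ x in Set.Ici (0:ℝ), Real.exp (-(1/2) * x ^ 2) := by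
    have hmp := MeasureTheory.measurePreserving_add_right (volume : Measure ℝ) t
    have hemb : MeasurableEmbedding (fun x : ℝ => x + t) :=
      (Homeomorph.addRight t).measurableEmbedding
    have := hmp.setIntegral_preimage_emb hemb
      (fun x : ℝ => Real.exp (-(1/2) * (x - t) ^ 2)) (Set.Ici t)
    have hpre : (fun x : ℝ => x + t) ⁻¹' Set.Ici t = Set.Ici (0:ℝ) := by
      ext x; simp [Set.mem_Ici]
    rw [hpre] at this
    rw [← this]
    congr 1
    ext x
    simp
  rw [hshift]
  have h0 : ∫ x in Set.Ici (0:ℝ), Real.exp (-(1/2) * x ^ 2) = √(2 * π) / 2 := by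
    rw [MeasureTheory.integral_Ici_eq_integral_Ioi, integral_gaussian_Ioi]
    norm_num
    ring
  rw [h0]
  have h2π : (0:ℝ) < √(2 * π) := Real.sqrt_pos.mpr (by positivity)
  have heq : (√(2 * π))⁻¹ * Real.exp (-t ^ 2 / 2) * (√(2 * π) / 2) =
      Real.exp (-t ^ 2 / 2) / 2 := by
    field_simp
  rw [heq]

/-- Two-sided Gaussian tail bound. -/
lemma gauss_tail_abs (t : ℝ) (ht : 0 ≤ t) :
    gaussianReal 0 1 {x : ℝ | t ≤ |x|} ≤ ENNReal.ofReal (Real.exp (-t ^ 2 / 2)) := by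
  have hsub : {x : ℝ | t ≤ |x|} ⊆ Set.Iic (-t) ∪ Set.Ici t := by
    intro x hx
    rcases abs_cases x with ⟨h1, _⟩ | ⟨h1, _⟩
    · right; rw [Set.mem_Ici]; rw [Set.mem_setOf_eq, h1] at hx; exact hx
    · left; rw [Set.mem_Iic]; rw [Set.mem_setOf_eq, h1] at hx; linarith
  refine (measure_mono hsub).trans ((measure_union_le _ _).trans ?_)
  have hneg : gaussianReal 0 1 (Set.Iic (-t)) = gaussianReal 0 1 (Set.Ici t) := by
    have hmap : (gaussianReal 0 1).map (fun x : ℝ => (-1) * x) = gaussianReal 0 1 := by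
      rw [gaussianReal_map_const_mul (-1 : ℝ)]
      norm_num
    have : Set.Iic (-t) = (fun x : ℝ => (-1) * x) ⁻¹' Set.Ici t := by
      ext x; simp [Set.mem_Ici, Set.mem_Iic]
    rw [this, ← Measure.map_apply (by fun_prop) measurableSet_Ici, hmap]
  rw [hneg]
  calc gaussianReal 0 1 (Set.Ici t) + gaussianReal 0 1 (Set.Ici t)
      ≤ ENNReal.ofReal (Real.exp (-t ^ 2 / 2) / 2) +
        ENNReal.ofReal (Real.exp (-t ^ 2 / 2) / 2) :=
        add_le_add (gauss_tail_Ici t ht) (gauss_tail_Ici t ht)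
    _ = ENNReal.ofReal (Real.exp (-t ^ 2 / 2)) := by
        rw [← ENNReal.ofReal_add (by positivity) (by positivity)]
        ring_nf

theorem union_bound_failure_event
    (M S : Finset ℕ) (hM : M.Nonempty) (hSM : S ⊆ M)
    (α : ℕ → ℝ) (αmin : ℝ) (hαmin : 0 < αmin)
    (h0 : ∀ j ∈ M \ S, α j = 0) (hsig : ∀ j ∈ S, αmin ≤ |α j|)
    (β τ : ℝ) (hβ : 0 < β) (hτ0 : 0 ≤ τ) (hτ : τ < β * αmin) :
    (Measure.pi fun _ : M => gaussianReal 0 1)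
      {w : M → ℝ |
        (∃ j : M, (j : ℕ) ∈ M \ S ∧ τ ≤ |β * α j + w j|) ∨
        (∃ j : M, (j : ℕ) ∈ S ∧ |β * α j + w j| < τ)} ≤
    ENNReal.ofReal ((M \ S).card * Real.exp (-τ ^ 2 / 2) +
      S.card * Real.exp (-(β * αmin - τ) ^ 2 / 2)) := by
  classical
  set t2 : ℝ := β * αmin - τ with ht2def
  have ht2 : 0 < t2 := by simp [ht2def]; linarith
  set B : M → Set ℝ := fun j => if (j : ℕ) ∈ S then {x : ℝ | t2 ≤ |x|} else {x : ℝ | τ ≤ |x|}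
    with hB
  have hsubset : {w : M → ℝ |
        (∃ j : M, (j : ℕ) ∈ M \ S ∧ τ ≤ |β * α j + w j|) ∨
        (∃ j : M, (j : ℕ) ∈ S ∧ |β * α j + w j| < τ)} ⊆
      ⋃ j : M, Function.eval j ⁻¹' B j := by
    rintro w (⟨j, hj, hw⟩ | ⟨j, hj, hw⟩)
    · refine Set.mem_iUnion.mpr ⟨j, ?_⟩
      have hjS : (j : ℕ) ∉ S := (Finset.mem_sdiff.mp hj).2
      have hα : α j = 0 := h0 _ hj
      simp only [hB, if_neg hjS, Set.mem_preimage, Function.eval, Set.mem_setOf_eq]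
      rw [hα] at hw
      simpa using hw
    · refine Set.mem_iUnion.mpr ⟨j, ?_⟩
      simp only [hB, if_pos hj, Set.mem_preimage, Function.eval, Set.mem_setOf_eq]
      have h1 : |β * α j| - |β * α j + w j| ≤ |w j| := by
        have := abs_sub_abs_le_abs_sub (β * α j) (β * α j + w j)
        simp only [sub_add_cancel_left, abs_neg] at this
        linarith [this]
      have h2 : β * αmin ≤ |β * α j| := by
        rw [abs_mul, abs_of_pos hβ]
        exact mul_le_mul_of_nonneg_left (hsig _ hj) hβ.le
      simp only [ht2def]
      linarith
  refine (measure_mono hsubset).trans ?_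
  refine (measure_iUnion_le _).trans ?_
  rw [tsum_fintype]
  have hmarg : ∀ j : M, (Measure.pi fun _ : M => gaussianReal 0 1)
      (Function.eval j ⁻¹' B j) = gaussianReal 0 1 (B j) := by
    intro j
    rw [Set.eval_preimage, Measure.pi_pi]
    rw [Finset.prod_eq_single j]
    · simp
    · intro i _ hij
      rw [Function.update_of_ne hij]
      simp
    · simp
  have hbound : ∀ j : M, gaussianReal 0 1 (B j) ≤
      if (j : ℕ) ∈ S then ENNReal.ofReal (Real.exp (-t2 ^ 2 / 2))
      else ENNReal.ofReal (Real.exp (-τ ^ 2 / 2)) := by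
    intro j
    by_cases hj : (j : ℕ) ∈ S
    · simp only [hB, if_pos hj]
      exact gauss_tail_abs t2 ht2.le
    · simp only [hB, if_neg hj]
      exact gauss_tail_abs τ hτ0
  calc ∑ j : M, (Measure.pi fun _ : M => gaussianReal 0 1) (Function.eval j ⁻¹' B j)
      ≤ ∑ j : M, (if (j : ℕ) ∈ S then ENNReal.ofReal (Real.exp (-t2 ^ 2 / 2))
          else ENNReal.ofReal (Real.exp (-τ ^ 2 / 2))) := by
        refine Finset.sum_le_sum fun j _ => ?_
        rw [hmarg j]
        exact hbound j
    _ = ∑ j ∈ M, (if j ∈ S then ENNReal.ofReal (Real.exp (-t2 ^ 2 / 2))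
          else ENNReal.ofReal (Real.exp (-τ ^ 2 / 2))) := by
        rw [← Finset.sum_coe_sort M (fun j => if j ∈ S then
          ENNReal.ofReal (Real.exp (-t2 ^ 2 / 2)) else ENNReal.ofReal (Real.exp (-τ ^ 2 / 2)))]
    _ = S.card * ENNReal.ofReal (Real.exp (-t2 ^ 2 / 2)) +
          (M \ S).card * ENNReal.ofReal (Real.exp (-τ ^ 2 / 2)) := by
        rw [Finset.sum_ite, Finset.sum_const, Finset.sum_const]
        have h1 : M.filter (· ∈ S) = S := by
          rw [Finset.filter_mem_eq_inter, Finset.inter_eq_right.mpr hSM]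
        have h2 : M.filter (· ∉ S) = M \ S := (Finset.sdiff_eq_filter M S).symm
        rw [h1, h2, nsmul_eq_mul, nsmul_eq_mul]
    _ ≤ ENNReal.ofReal ((M \ S).card * Real.exp (-τ ^ 2 / 2) +
          S.card * Real.exp (-(β * αmin - τ) ^ 2 / 2)) := by
        rw [ENNReal.ofReal_add (by positivity) (by positivity),
          ENNReal.ofReal_mul (by positivity), ENNReal.ofReal_mul (by positivity),
          ENNReal.ofReal_natCast, ENNReal.ofReal_natCast]
        rw [add_comm]
end

section
/- Theorem 1 (exact support recovery for tree-sparse signals via adaptive sensing): let d ≥ 1 be an integer and let S ⊆ ℕ be a rooted connected subtree of the infinite complete d-ary tree on ℕ with |S| = k ≥ 2. Let α : ℕ → ℝ satisfy α_j = 0 for j ∉ S, and set α_min = min_{j∈S} |α_j| > 0. For every c₁ > 0 and every c₂ ∈ (0,1) there exists c₃ > 0 (depending only on c₁, c₂, d) such that the following holds for every β > 0: if α_min ≥ sqrt(c₃·log k / β²) and τ = c₂·β·α_min, then, letting P be the product measure over the measured set M(S) of standard Gaussians N(0,1) (modeling i.i.d. noise w), one has P({w : {j ∈ M(S) : |β·α_j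 + w_j| ≥ τ} = S}) ≥ 1 − k^{−c₁}; moreover the total number of measurements is |M(S)| = d·k + 1. -/
/-!
Put `δ = m β α_min` with `m = min c₂ (1 - c₂)`. If every noise coordinate satisfies `|w_j| < δ`,
thresholding at `τ = c₂ β α_min` recovers `S` exactly: off `S` the observation is pure noise,
below `τ`, while on `S` it is at least `β α_min - δ ≥ τ`. A standard Gaussian exceeds `δ` in
absolute value with probability at most `2 exp (-δ² / 2)` (Chernoff bound), so by a union bound
over the `d k + 1` measured locations recovery fails with probability at most
`(d k + 1) · 2 exp (-δ² / 2)`, which is `≤ k^(-c₁)` once `δ² ≥ m² c₃ log k` for a suitable `c₃`.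
-/

open MeasureTheory ProbabilityTheory Real

/-- The children of node `i` in the infinite complete `d`-ary tree on `ℕ`:
`children d i = {d·i + j : 1 ≤ j ≤ d}`. -/
def children (d i : ℕ) : Finset ℕ := (Finset.Icc 1 d).image (fun j => d * i + j)

/-- A finite set `S ⊆ ℕ` is a rooted connected subtree of the infinite complete `d`-ary
tree: it is nonempty, contains the root `0`, and is closed under taking parents,
where the parent of `j ≥ 1` is `⌊(j-1)/d⌋`. -/
def IsRootedSubtree (d : ℕ) (S : Finset ℕ) : Prop :=
  S.Nonempty ∧ 0 ∈ S ∧ ∀ j ∈ S, 1 ≤ j → (j - 1) / d ∈ S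

/-- The measured set `M(S) = {0} ∪ ⋃_{i ∈ S} children(i)`. -/
def measuredSet (d : ℕ) (S : Finset ℕ) : Finset ℕ := {0} ∪ S.biUnion (children d)

open scoped NNReal

lemma one_le_of_mem_children {d i j : ℕ} (h : j ∈ children d i) : 1 ≤ j := by
  simp only [children, Finset.mem_image, Finset.mem_Icc] at h
  omega

lemma parent_eq_of_mem_children {d i j : ℕ} (h : j ∈ children d i) : (j - 1) / d = i := by
  simp only [children, Finset.mem_image, Finset.mem_Icc] at h
  obtain ⟨r, ⟨hr1, hrd⟩, rfl⟩ := h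
  rw [show d * i + r - 1 = (r - 1) + d * i by omega, Nat.add_mul_div_left _ _ (by omega),
    Nat.div_eq_of_lt (by omega), zero_add]

lemma mem_children_parent {d j : ℕ} (hd : 1 ≤ d) (hj : 1 ≤ j) :
    j ∈ children d ((j - 1) / d) := by
  simp only [children, Finset.mem_image, Finset.mem_Icc]
  have h1 := Nat.div_add_mod (j - 1) d
  have h2 := Nat.mod_lt (j - 1) (show 0 < d by omega)
  exact ⟨(j - 1) % d + 1, by omega, by omega⟩

lemma card_children (d i : ℕ) : (children d i).card = d := by
  rw [children, Finset.card_image_of_injective _ (fun a b h => by omega), Nat.card_Icc,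
    Nat.add_sub_cancel]

lemma card_measuredSet (d : ℕ) (S : Finset ℕ) : (measuredSet d S).card = d * S.card + 1 := by
  have hdisj : Set.PairwiseDisjoint ↑S (children d) := fun a _ b _ hab =>
    Finset.disjoint_left.2 fun j hja hjb =>
      hab (parent_eq_of_mem_children hja ▸ parent_eq_of_mem_children hjb)
  have hroot : Disjoint {0} (S.biUnion (children d)) := by
    simp only [Finset.disjoint_singleton_left, Finset.mem_biUnion, not_exists, not_and]
    exact fun i _ h0 => absurd (one_le_of_mem_children h0) (by omega)
  rw [measuredSet, Finset.card_union_of_disjoint hroot, Finset.card_singleton,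
    Finset.card_biUnion hdisj, Finset.sum_congr rfl fun i _ => card_children d i,
    Finset.sum_const, smul_eq_mul, mul_comm, add_comm]

lemma IsRootedSubtree.subset_measuredSet {d : ℕ} {S : Finset ℕ} (hS : IsRootedSubtree d S)
    (hd : 1 ≤ d) : S ⊆ measuredSet d S := by
  intro j hj
  rw [measuredSet, Finset.mem_union, Finset.mem_singleton, Finset.mem_biUnion]
  rcases Nat.eq_zero_or_pos j with rfl | hj1
  · exact Or.inl rfl
  · exact Or.inr ⟨_, hS.2.2 j hj hj1, mem_children_parent hd hj1⟩

lemma image_filter_le_abs_add_eq {ι : Type*} [DecidableEq ι] {M S : Finset ι} (hSM : S ⊆ M)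
    {s : ι → ℝ} {w : M → ℝ} {τ δ : ℝ} (hs0 : ∀ j ∉ S, s j = 0)
    (hs : ∀ j ∈ S, τ + δ ≤ |s j|) (hδτ : δ ≤ τ) (hw : ∀ j, |w j| < δ) :
    (M.attach.filter fun j : M => τ ≤ |s j + w j|).image Subtype.val = S := by
  ext x
  simp only [Finset.mem_image, Finset.mem_filter, Finset.mem_attach, true_and]
  constructor
  · rintro ⟨j, hj, rfl⟩
    by_contra hjS
    rw [hs0 _ hjS, zero_add] at hj
    linarith [hw j]
  · intro hx
    refine ⟨⟨x, hSM hx⟩, ?_, rfl⟩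
    have := abs_sub_abs_le_abs_add (s x) (w ⟨x, hSM hx⟩)
    linarith [hw ⟨x, hSM hx⟩, hs x hx]

theorem hasSubgaussianMGF_gaussianReal (v : ℝ≥0) :
    HasSubgaussianMGF (fun x => x) v (gaussianReal 0 v) where
  integrable_exp_mul := integrable_exp_mul_gaussianReal
  mgf_le t := by simp [mgf_fun_id_gaussianReal]

lemma gaussianReal_le_abs_le (v : ℝ≥0) {t : ℝ} (ht : 0 ≤ t) :
    gaussianReal 0 v {x | t ≤ |x|} ≤ ENNReal.ofReal (2 * exp (-t ^ 2 / (2 * v))) := by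
  have h := hasSubgaussianMGF_gaussianReal v
  have hsplit : {x : ℝ | t ≤ |x|} = {x | t ≤ x} ∪ {x | t ≤ -x} := by
    ext x; simp only [Set.mem_ofPred_eq, Set.mem_union, le_abs', le_neg, or_comm]
  have hright := ofReal_measureReal (μ := gaussianReal 0 v) (s := {x | t ≤ x}) ▸
    ENNReal.ofReal_le_ofReal (h.measure_ge_le ht)
  have hleft := ofReal_measureReal (μ := gaussianReal 0 v) (s := {x | t ≤ -x}) ▸
    ENNReal.ofReal_le_ofReal (h.neg.measure_ge_le ht)
  calc gaussianReal 0 v {x | t ≤ |x|}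
      ≤ gaussianReal 0 v {x | t ≤ x} + gaussianReal 0 v {x | t ≤ -x} :=
        hsplit ▸ measure_union_le _ _
    _ ≤ ENNReal.ofReal (exp (-t ^ 2 / (2 * v))) + ENNReal.ofReal (exp (-t ^ 2 / (2 * v))) :=
        add_le_add hright hleft
    _ = ENNReal.ofReal (2 * exp (-t ^ 2 / (2 * v))) := by
        rw [← ENNReal.ofReal_add (exp_nonneg _) (exp_nonneg _), ← two_mul]

lemma measure_pi_exists_mem_le {ι α : Type*} [Fintype ι] [MeasurableSpace α]
    (μ : ι → Measure α) [∀ i, IsProbabilityMeasure (μ i)] {A : ι → Set α}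
    (hA : ∀ i, MeasurableSet (A i)) :
    Measure.pi μ {w | ∃ i, w i ∈ A i} ≤ ∑ i, μ i (A i) := by
  rw [Set.ofPred_exists]
  refine (measure_iUnion_fintype_le _ _).trans (le_of_eq ?_)
  exact Finset.sum_congr rfl fun i _ =>
    (measurePreserving_eval μ i).measure_preimage (hA i).nullMeasurableSet

lemma ofReal_one_sub_le_pi_gaussianReal_forall_abs_lt {ι : Type*} [Fintype ι] (v : ℝ≥0)
    {δ : ℝ} (hδ : 0 ≤ δ) :
    ENNReal.ofReal (1 - Fintype.card ι * (2 * exp (-δ ^ 2 / (2 * v)))) ≤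
      (Measure.pi fun _ : ι => gaussianReal 0 v) {w | ∀ i, |w i| < δ} := by
  set μ := Measure.pi fun _ : ι => gaussianReal 0 v
  set G := {w : ι → ℝ | ∀ i, |w i| < δ}
  have hG : MeasurableSet G := by measurability
  have hGc : μ Gᶜ ≤ Fintype.card ι * ENNReal.ofReal (2 * exp (-δ ^ 2 / (2 * v))) := by
    have hcompl : Gᶜ = {w | ∃ i, w i ∈ {x | δ ≤ |x|}} := by ext w; simp [G]
    calc μ Gᶜ ≤ ∑ _i : ι, gaussianReal 0 v {x | δ ≤ |x|} :=
          hcompl ▸ measure_pi_exists_mem_le _ fun _ =>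
            measurableSet_le measurable_const (by fun_prop)
      _ ≤ ∑ _i : ι, ENNReal.ofReal (2 * exp (-δ ^ 2 / (2 * v))) :=
          Finset.sum_le_sum fun _ _ => gaussianReal_le_abs_le v hδ
      _ = _ := by rw [Finset.sum_const, nsmul_eq_mul, Finset.card_univ]
  rw [← compl_compl G, prob_compl_eq_one_sub hG.compl, ENNReal.ofReal_sub _ (by positivity),
    ENNReal.ofReal_one, ENNReal.ofReal_mul (Nat.cast_nonneg _), ENNReal.ofReal_natCast]
  exact tsub_le_tsub_left hGc 1

/-- Since `log k ≥ log 2`, the term `log (4 d) / log 2 · log k` dominates `log (4 d)`, which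
absorbs the factor `2 (d k + 1) ≤ 4 d k` of the union bound. -/
lemma card_mul_two_exp_le_rpow {d k : ℕ} (hd : 1 ≤ d) (hk : 2 ≤ k) (c : ℝ) {t : ℝ}
    (ht : 2 * (c + 1 + log (4 * d) / log 2) * log k ≤ t ^ 2) :
    ((d * k + 1 : ℕ) : ℝ) * (2 * exp (-t ^ 2 / 2)) ≤ (k : ℝ) ^ (-c) := by
  have hk0 : (0 : ℝ) < k := by positivity
  have hd1 : (1 : ℝ) ≤ d := by exact_mod_cast hd
  have hlog2 : 0 < log 2 := log_pos one_lt_two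
  have hlogk : log 2 ≤ log k := log_le_log two_pos (by exact_mod_cast hk)
  have hlog4d : log (4 * d) ≤ log (4 * d) / log 2 * log k := by
    calc log (4 * d) = log (4 * d) / log 2 * log 2 := by field_simp
      _ ≤ _ := mul_le_mul_of_nonneg_left hlogk (div_nonneg (log_nonneg (by linarith)) hlog2.le)
  have hcard : ((d * k + 1 : ℕ) : ℝ) * 2 ≤ exp (log (4 * d) + log k) := by
    rw [exp_add, exp_log (by positivity), exp_log hk0]
    have hdk : (1 : ℝ) ≤ d * k :=
      one_le_mul_of_one_le_of_one_le hd1 (by exact_mod_cast hk.trans' one_le_two)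
    push_cast
    linarith
  calc ((d * k + 1 : ℕ) : ℝ) * (2 * exp (-t ^ 2 / 2))
      ≤ exp (log (4 * d) + log k) * exp (-((c + 1) * log k + log (4 * d))) := by
        rw [← mul_assoc]
        gcongr
        linarith
    _ = (k : ℝ) ^ (-c) := by
        rw [← exp_add, rpow_def_of_pos hk0]
        ring_nf

theorem exact_support_recovery_tree_sparse_general
    (d : ℕ) (hd : 1 ≤ d) (S : Finset ℕ) (hS : IsRootedSubtree d S)
    (k : ℕ) (hk : S.card = k) (hk2 : 2 ≤ k)
    (α : ℕ → ℝ) (h0 : ∀ j ∉ S, α j = 0)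
    (αmin : ℝ) (hαminEq : αmin = S.inf' hS.1 fun j => |α j|)
    (c₁ c₂ : ℝ) (hc₁ : 0 < c₁) (hc₂0 : 0 < c₂) (hc₂1 : c₂ < 1) :
    ∃ c₃ : ℝ, 0 < c₃ ∧ ∀ β : ℝ, 0 < β →
      Real.sqrt (c₃ * Real.log k / β ^ 2) ≤ αmin →
      ∀ τ : ℝ, τ = c₂ * β * αmin →
      (Measure.pi fun _ : ↥(measuredSet d S) => gaussianReal 0 1)
        {w : ↥(measuredSet d S) → ℝ |
          ((measuredSet d S).attach.filter
            fun (j : {x // x ∈ measuredSet d S}) => τ ≤ |β * α (j : ℕ) + w j|).image Subtype.val = S} ≥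
        ENNReal.ofReal (1 - (k : ℝ) ^ (-c₁)) ∧
      (measuredSet d S).card = d * k + 1 := by
  have hcard : (measuredSet d S).card = d * k + 1 := by rw [card_measuredSet, hk]
  obtain ⟨m, hm, hmc₂, hm1c₂⟩ : ∃ m : ℝ, 0 < m ∧ m ≤ c₂ ∧ m ≤ 1 - c₂ :=
    ⟨min c₂ (1 - c₂), lt_min hc₂0 (by linarith), min_le_left _ _, min_le_right _ _⟩
  have hlog4d : 0 ≤ log (4 * d) / log 2 :=
    div_nonneg (log_nonneg (by norm_cast; omega)) (log_pos one_lt_two).le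
  refine ⟨2 * (c₁ + 1 + log (4 * d) / log 2) / m ^ 2, by positivity,
    fun β hβ hsqrt τ hτ => ⟨?_, hcard⟩⟩
  obtain ⟨hαmin, hαmin_sq⟩ := sqrt_le_iff.1 hsqrt
  set δ := m * (β * αmin)
  have hδ_sq : 2 * (c₁ + 1 + log (4 * d) / log 2) * log k ≤ δ ^ 2 := by
    rw [div_le_iff₀ (by positivity), div_mul_eq_mul_div, div_le_iff₀ (by positivity)]
      at hαmin_sq
    nlinarith
  have hβαmin : 0 ≤ β * αmin := by positivity
  have hδτ : δ ≤ τ := by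
    rw [hτ, mul_assoc]
    exact mul_le_mul_of_nonneg_right hmc₂ hβαmin
  have hsignal : ∀ j ∈ S, τ + δ ≤ |β * α j| := fun j hj => by
    have hδ1 : δ ≤ (1 - c₂) * (β * αmin) := mul_le_mul_of_nonneg_right hm1c₂ hβαmin
    have hαj : β * αmin ≤ β * |α j| :=
      mul_le_mul_of_nonneg_left (hαminEq ▸ S.inf'_le _ hj) hβ.le
    rw [abs_mul, abs_of_pos hβ, hτ]
    linarith
  have hrecover : {w : ↥(measuredSet d S) → ℝ | ∀ j, |w j| < δ} ⊆
      {w | ((measuredSet d S).attach.filter fun (j : {x // x ∈ measuredSet d S}) =>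
        τ ≤ |β * α (j : ℕ) + w j|).image Subtype.val = S} :=
    fun w hw => image_filter_le_abs_add_eq (hS.subset_measuredSet hd)
      (fun j hj => by rw [h0 j hj, mul_zero]) hsignal hδτ hw
  calc ENNReal.ofReal (1 - (k : ℝ) ^ (-c₁))
      ≤ ENNReal.ofReal (1 - Fintype.card ↥(measuredSet d S) *
          (2 * exp (-δ ^ 2 / (2 * (1 : ℝ≥0))))) := by
        rw [Fintype.card_coe, hcard, NNReal.coe_one, mul_one]
        exact ENNReal.ofReal_le_ofReal (by linarith [card_mul_two_exp_le_rpow hd hk2 c₁ hδ_sq])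
    _ ≤ _ := ofReal_one_sub_le_pi_gaussianReal_forall_abs_lt 1 (by positivity)
    _ ≤ _ := measure_mono hrecover

theorem exact_support_recovery_tree_sparse
    (d : ℕ) (hd : 1 ≤ d) (S : Finset ℕ) (hS : IsRootedSubtree d S)
    (k : ℕ) (hk : S.card = k) (hk2 : 2 ≤ k)
    (α : ℕ → ℝ) (h0 : ∀ j ∉ S, α j = 0)
    (αmin : ℝ) (hαminEq : αmin = S.inf' hS.1 fun j => |α j|) (hαmin : 0 < αmin)
    (c₁ c₂ : ℝ) (hc₁ : 0 < c₁) (hc₂0 : 0 < c₂) (hc₂1 : c₂ < 1) :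
    ∃ c₃ : ℝ, 0 < c₃ ∧ ∀ β : ℝ, 0 < β →
      Real.sqrt (c₃ * Real.log k / β ^ 2) ≤ αmin →
      ∀ τ : ℝ, τ = c₂ * β * αmin →
      (Measure.pi fun _ : ↥(measuredSet d S) => gaussianReal 0 1)
        {w : ↥(measuredSet d S) → ℝ |
          ((measuredSet d S).attach.filter
            fun (j : {x // x ∈ measuredSet d S}) => τ ≤ |β * α (j : ℕ) + w j|).image Subtype.val = S} ≥
        ENNReal.ofReal (1 - (k : ℝ) ^ (-c₁)) ∧
      (measuredSet d S).card = d * k + 1 :=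
  exact_support_recovery_tree_sparse_general d hd S hS k hk hk2 α h0 αmin hαminEq c₁ c₂ hc₁ hc₂0
    hc₂1
end
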